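/- Let U be a set of 2^m distinct nonzero vectors in F_2^n, let B : F_2^n → F_2^m be a uniformly random linear map, fix y ∈ F_2^m, and define Z_y = |{u ∈ U : B u = y}|. Then for every integer a ≥ 1, Pr[Z_y > 2^a - 2] ≤ γ^{-1} 2^{-a^2}, where γ = ∏_{j=1}^∞ (1 - 2^{-j}). -/

import Mathlib

/-- The space of F_2-linear maps from F_2^n to F_2^m. -/
abbrev Lin (n m : ℕ) := (Fin n → ZMod 2) →ₗ[ZMod 2] (Fin m → ZMod 2)

/-- γ = ∏_{j=1}^∞ (1 - 2^{-j}). -/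
noncomputable def gammaProd : ℝ := ∏' j : ℕ, (1 - (2 : ℝ)⁻¹ ^ (j + 1))

/-!
If the fibre `S = U ∩ B⁻¹(y)` has more than `2^a - 2` elements, all of them nonzero, then
choosing vectors of `S` greedily outside the span of the previous ones shows that `S` contains
at least `∏_{k<a} (2^a - 2^k) = 2^{a²} ∏_{j≤a} (1 - 2^{-j}) ≥ 2^{a²} γ` linearly independent
`a`-tuples. On the other hand, a linearly independent `a`-tuple of `U` is sent to `(y, …, y)` by
exactly a `2^{-ma}` fraction of all linear maps, and `U` has at most `2^{ma}` such tuples, so on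
average the fibre contains at most one linearly independent `a`-tuple. Markov's inequality gives
the bound.
-/

open Finset

lemma one_sub_two_inv_pow_succ_pos (j : ℕ) : 0 < 1 - (2 : ℝ)⁻¹ ^ (j + 1) := by
  have : (2 : ℝ)⁻¹ ^ (j + 1) < 1 := pow_lt_one₀ (by norm_num) (by norm_num) (by omega)
  linarith

lemma summable_log_one_sub_two_inv_pow_succ :
    Summable fun j : ℕ => Real.log (1 - (2 : ℝ)⁻¹ ^ (j + 1)) := by
  have hgeom : Summable fun j : ℕ => (2 : ℝ)⁻¹ ^ (j + 1) :=
    (summable_nat_add_iff 1).mpr (summable_geometric_of_lt_one (by norm_num) (by norm_num))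
  simpa [sub_eq_add_neg] using Real.summable_log_one_add_of_summable hgeom.neg

lemma gammaProd_pos : 0 < gammaProd := by
  rw [gammaProd, ← Real.rexp_tsum_eq_tprod one_sub_two_inv_pow_succ_pos
    summable_log_one_sub_two_inv_pow_succ]
  exact Real.exp_pos _

lemma gammaProd_le_prod_range (a : ℕ) :
    gammaProd ≤ ∏ j ∈ range a, (1 - (2 : ℝ)⁻¹ ^ (j + 1)) := by
  have hanti : Antitone fun a => ∏ j ∈ range a, (1 - (2 : ℝ)⁻¹ ^ (j + 1)) := by
    refine antitone_nat_of_succ_le fun a => ?_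
    rw [prod_range_succ]
    exact mul_le_of_le_one_right
      (prod_nonneg fun j _ => (one_sub_two_inv_pow_succ_pos j).le) (by simp)
  exact hanti.le_of_tendsto (Real.multipliable_of_summable_log one_sub_two_inv_pow_succ_pos
    summable_log_one_sub_two_inv_pow_succ).tendsto_prod_tprod_nat a

lemma prod_range_two_pow_sub_two_pow (a : ℕ) :
    ∏ k ∈ range a, ((2 ^ a - 2 ^ k : ℕ) : ℝ) =
      2 ^ (a ^ 2) * ∏ j ∈ range a, (1 - (2 : ℝ)⁻¹ ^ (j + 1)) := by
  have hfactor : ∀ k ∈ range a,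
      ((2 ^ a - 2 ^ k : ℕ) : ℝ) = 2 ^ a * (1 - (2 : ℝ)⁻¹ ^ (a - 1 - k + 1)) := by
    intro k hk
    have hk : k < a := mem_range.1 hk
    have hsplit : (2 : ℝ) ^ a = 2 ^ k * 2 ^ (a - k) := by
      rw [← pow_add, Nat.add_sub_cancel' hk.le]
    rw [Nat.cast_sub (Nat.pow_le_pow_right two_pos hk.le), show a - 1 - k + 1 = a - k by omega]
    push_cast
    rw [hsplit, inv_pow, mul_sub, mul_one, mul_assoc, mul_inv_cancel₀ (by positivity), mul_one]
  rw [prod_congr rfl hfactor, prod_mul_distrib, prod_const, card_range, ← pow_mul, ← sq,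
    prod_range_reflect (fun j => 1 - (2 : ℝ)⁻¹ ^ (j + 1))]

lemma two_pow_sq_mul_gammaProd_le (a : ℕ) :
    2 ^ (a ^ 2) * gammaProd ≤ ∏ k ∈ range a, ((2 ^ a - 2 ^ k : ℕ) : ℝ) := by
  rw [prod_range_two_pow_sub_two_pow]
  gcongr
  exact gammaProd_le_prod_range a

section LinearMaps

variable {K V W ι : Type*} [DivisionRing K] [AddCommGroup V] [Module K V]
  [AddCommGroup W] [Module K W]

theorem LinearIndependent.exists_linearMap_apply_eq {u : ι → V} (hu : LinearIndependent K u)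
    (t : ι → W) : ∃ f : V →ₗ[K] W, ∀ i, f (u i) = t i := by
  obtain ⟨f, hf⟩ := LinearMap.exists_extend (Finsupp.linearCombination K t ∘ₗ hu.repr)
  refine ⟨f, fun i => ?_⟩
  have := LinearMap.congr_fun hf ⟨u i, Submodule.subset_span ⟨i, rfl⟩⟩
  simpa [hu.repr_eq_single i ⟨u i, _⟩ rfl] using this

theorem LinearIndependent.card_linearMap_apply_eq_mul_card_pow [Fintype ι] [DecidableEq ι]
    [Fintype W] [DecidableEq W] [Fintype (V →ₗ[K] W)] {u : ι → V}
    (hu : LinearIndependent K u) (t : ι → W) :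
    #{f : V →ₗ[K] W | ∀ i, f (u i) = t i} * Fintype.card W ^ Fintype.card ι =
      Fintype.card (V →ₗ[K] W) := by
  let eval : (V →ₗ[K] W) →+ (ι → W) :=
    { toFun := fun f i => f (u i), map_zero' := rfl, map_add' := fun _ _ => rfl }
  have hsurj : Function.Surjective eval := fun s =>
    (hu.exists_linearMap_apply_eq s).imp fun _ hf => funext hf
  have hfiber : ∀ s, #{f | eval f = s} = #{f : V →ₗ[K] W | ∀ i, f (u i) = t i} := by
    intro s
    rw [AddMonoidHom.card_fiber_eq_of_mem_range eval (hsurj s) (hsurj t)]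
    simp [eval, funext_iff]
  calc _ = ∑ s : ι → W, #{f | eval f = s} := by simp [hfiber, mul_comm]
    _ = Fintype.card (V →ₗ[K] W) := (card_eq_sum_card_fiberwise fun _ _ => mem_univ _).symm

end LinearMaps

section IndepTuples

variable (K : Type*) {V W : Type*} [DivisionRing K] [AddCommGroup V] [Module K V]
  [AddCommGroup W] [Module K W]

open scoped Classical in
noncomputable def indepTuples (S : Finset V) (j : ℕ) : Finset (Fin j → V) :=
  (Fintype.piFinset fun _ => S).filter fun u => LinearIndependent K u

variable {K}

lemma mem_indepTuples {S : Finset V} {j : ℕ} {u : Fin j → V} :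
    u ∈ indepTuples K S j ↔ (∀ i, u i ∈ S) ∧ LinearIndependent K u := by
  classical
  simp [indepTuples]

lemma card_indepTuples_le (S : Finset V) (j : ℕ) : #(indepTuples K S j) ≤ #S ^ j := by
  classical
  exact (card_filter_le _ _).trans_eq (Fintype.card_piFinset_const S j)

lemma indepTuples_filter (S : Finset V) (p : V → Prop) [DecidablePred p] (j : ℕ) :
    indepTuples K (S.filter p) j = (indepTuples K S j).filter fun u => ∀ i, p (u i) := by
  ext u
  simp only [mem_filter, mem_indepTuples, forall_and]
  tauto

open scoped Classical in
lemma card_filter_mem_span_add_one_le [Fintype K] {S : Finset V} (hS : 0 ∉ S) {j : ℕ}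
    (v : Fin j → V) :
    #(S.filter (· ∈ Submodule.span K (Set.range v))) + 1 ≤ Fintype.card K ^ j := by
  calc #(S.filter (· ∈ Submodule.span K (Set.range v))) + 1
      = #(insert 0 (S.filter (· ∈ Submodule.span K (Set.range v)))) :=
        (card_insert_of_notMem fun h => hS (mem_filter.1 h).1).symm
    _ ≤ #(univ.image fun c : Fin j → K => ∑ i, c i • v i) := by
        refine card_le_card fun x hx => ?_
        obtain rfl | hx := mem_insert.1 hx
        · exact mem_image.2 ⟨0, mem_univ _, by simp⟩
        · obtain ⟨c, hc⟩ :=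
            (Submodule.mem_span_range_iff_exists_fun K).1 (mem_filter.1 hx).2
          exact mem_image.2 ⟨c, mem_univ _, hc⟩
    _ ≤ Fintype.card K ^ j := card_image_le.trans_eq (by simp)

lemma card_indepTuples_mul_le_card_indepTuples_succ [Fintype K] {S : Finset V} (hS : 0 ∉ S)
    (j : ℕ) :
    #(indepTuples K S j) * (#S + 1 - Fintype.card K ^ j) ≤ #(indepTuples K S (j + 1)) := by
  classical
  let avoid : (Fin j → V) → Finset V := fun v =>
    S.filter (· ∉ Submodule.span K (Set.range v))
  have havoid : ∀ v, #S + 1 - Fintype.card K ^ j ≤ #(avoid v) := fun v => by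
    have := card_filter_mem_span_add_one_le (K := K) hS v
    have := S.card_filter_add_card_filter_not (· ∈ Submodule.span K (Set.range v))
    simp only [avoid]
    omega
  calc #(indepTuples K S j) * (#S + 1 - Fintype.card K ^ j)
      ≤ ∑ v ∈ indepTuples K S j, #(avoid v) := by
        rw [← smul_eq_mul]
        exact card_nsmul_le_sum _ _ _ fun v _ => havoid v
    _ = #((indepTuples K S j).sigma avoid) := (card_sigma _ _).symm
    _ ≤ #(indepTuples K S (j + 1)) := by
        refine card_le_card_of_injOn (fun p => Fin.snoc p.1 p.2) (fun p hp => ?_)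
          fun p _ q _ h => ?_
        · obtain ⟨hv, hw⟩ := mem_sigma.1 hp
          obtain ⟨hwS, hwspan⟩ := mem_filter.1 hw
          rw [mem_indepTuples] at hv
          rw [mem_coe, mem_indepTuples]
          refine ⟨Fin.lastCases (by simpa using hwS) (fun i => by simpa using hv.1 i),
            linearIndependent_finSnoc.2 ⟨hv.2, hwspan⟩⟩
        · obtain ⟨h1, h2⟩ := Fin.snoc_injective2 h
          exact Sigma.ext h1 (heq_of_eq h2)

theorem prod_le_card_indepTuples [Fintype K] {S : Finset V} (hS : 0 ∉ S) (j : ℕ) :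
    ∏ k ∈ range j, (#S + 1 - Fintype.card K ^ k) ≤ #(indepTuples K S j) := by
  induction j with
  | zero =>
    exact card_pos.2
      ⟨Fin.elim0, mem_indepTuples.2 ⟨fun i => i.elim0, linearIndependent_empty_type⟩⟩
  | succ j ih =>
    rw [prod_range_succ]
    exact (Nat.mul_le_mul_right _ ih).trans (card_indepTuples_mul_le_card_indepTuples_succ hS j)

theorem sum_card_indepTuples_fiber_mul [DecidableEq W] [Fintype W] [Fintype (V →ₗ[K] W)]
    (U : Finset V) (y : W) (j : ℕ) :
    (∑ f : V →ₗ[K] W, #(indepTuples K (U.filter (f · = y)) j)) * Fintype.card W ^ j =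
      #(indepTuples K U j) * Fintype.card (V →ₗ[K] W) := by
  simp only [indepTuples_filter, card_filter]
  rw [sum_comm, sum_mul, sum_const_nat fun u hu => ?_]
  rw [← card_filter]
  convert (mem_indepTuples.1 hu).2.card_linearMap_apply_eq_mul_card_pow fun _ => y
  rw [Fintype.card_fin]

theorem card_bigFiber_mul_prod_le_card_linearMap [Fintype K] [DecidableEq W] [Fintype W]
    [Fintype (V →ₗ[K] W)] {U : Finset V} (hU0 : 0 ∉ U) (hUW : #U = Fintype.card W) (y : W)
    (a : ℕ) :
    #{f : V →ₗ[K] W | Fintype.card K ^ a - 1 ≤ #(U.filter (f · = y))} *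
        ∏ k ∈ range a, (Fintype.card K ^ a - Fintype.card K ^ k) ≤
      Fintype.card (V →ₗ[K] W) := by
  set big : Finset (V →ₗ[K] W) := {f | Fintype.card K ^ a - 1 ≤ #(U.filter (f · = y))}
  have hbig : ∀ f ∈ big, ∏ k ∈ range a, (Fintype.card K ^ a - Fintype.card K ^ k) ≤
      #(indepTuples K (U.filter (f · = y)) a) := by
    intro f hf
    have hfiber := (mem_filter.1 hf).2
    refine le_trans (prod_le_prod' fun k _ => ?_)
      (prod_le_card_indepTuples (fun h => hU0 (mem_filter.1 h).1) a)
    omega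
  have hsum := sum_card_indepTuples_fiber_mul (K := K) U y a
  rw [← hUW] at hsum
  calc _ ≤ ∑ f ∈ big, #(indepTuples K (U.filter (f · = y)) a) := card_nsmul_le_sum _ _ _ hbig
    _ ≤ ∑ f : V →ₗ[K] W, #(indepTuples K (U.filter (f · = y)) a) :=
        sum_le_sum_of_subset (subset_univ _)
    _ ≤ Fintype.card (V →ₗ[K] W) := Nat.le_of_mul_le_mul_right
        ((hsum.trans_le (Nat.mul_le_mul_right _ (card_indepTuples_le U a))).trans_eq
          (mul_comm _ _)) (hUW ▸ pow_pos (Fintype.card_pos_iff.2 ⟨y⟩) a)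

end IndepTuples

theorem stmt_2_general (n m : ℕ) (U : Finset (Fin n → ZMod 2))
    (hUcard : U.card = 2 ^ m) (hU0 : (0 : Fin n → ZMod 2) ∉ U)
    (y : Fin m → ZMod 2) (a : ℕ) :
    (Nat.card {B : Lin n m // 2 ^ a - 2 < (U.filter (fun x => B x = y)).card} : ℝ) /
        (Nat.card (Lin n m) : ℝ) ≤
      gammaProd⁻¹ * ((2 : ℝ) ^ (a ^ 2))⁻¹ := by
  classical
  let _ : Fintype (Lin n m) := Fintype.ofInjective _ DFunLike.coe_injective
  set bad := univ.filter fun B : Lin n m => 2 ^ a - 2 < #(U.filter (B · = y))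
  have hbig := card_bigFiber_mul_prod_le_card_linearMap (K := ZMod 2) hU0 (by simp [hUcard]) y a
  rw [ZMod.card] at hbig
  have hsub : bad ⊆ univ.filter fun B : Lin n m => 2 ^ a - 1 ≤ #(U.filter (B · = y)) :=
    fun B hB => mem_filter.2 ⟨mem_univ B, by have := (mem_filter.1 hB).2; omega⟩
  have hcount := (Nat.mul_le_mul_right _ (card_le_card hsub)).trans hbig
  have hL : (0 : ℝ) < Fintype.card (Lin n m) := by exact_mod_cast Fintype.card_pos
  rw [Nat.card_eq_fintype_card, Fintype.card_subtype, Nat.card_eq_fintype_card, div_le_iff₀ hL,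
    ← mul_inv, inv_mul_eq_div, le_div_iff₀ (mul_pos gammaProd_pos (by positivity))]
  calc (#bad : ℝ) * (gammaProd * 2 ^ (a ^ 2))
      ≤ #bad * ∏ k ∈ range a, ((2 ^ a - 2 ^ k : ℕ) : ℝ) := by
        rw [mul_comm gammaProd]
        gcongr
        exact two_pow_sq_mul_gammaProd_le a
    _ ≤ Fintype.card (Lin n m) := by exact_mod_cast hcount

/-- Let U be a set of 2^m distinct nonzero vectors in F_2^n, let B : F_2^n → F_2^m
be a uniformly random linear map, fix y ∈ F_2^m, and define Z_y = |{u ∈ U : B u = y}|.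
Then for every integer a ≥ 1, Pr[Z_y > 2^a - 2] ≤ γ^{-1} 2^{-a^2},
where γ = ∏_{j=1}^∞ (1 - 2^{-j}). -/
theorem stmt_2 (n m : ℕ) (U : Finset (Fin n → ZMod 2))
    (hUcard : U.card = 2 ^ m) (hU0 : (0 : Fin n → ZMod 2) ∉ U)
    (y : Fin m → ZMod 2) (a : ℕ) (ha : 1 ≤ a) :
    (Nat.card {B : Lin n m // 2 ^ a - 2 < (U.filter (fun x => B x = y)).card} : ℝ) /
        (Nat.card (Lin n m) : ℝ) ≤
      gammaProd⁻¹ * ((2 : ℝ) ^ (a ^ 2))⁻¹ :=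
  stmt_2_general n m U hUcard hU0 y a
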